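/- arXiv:0802.1826 — 2 statements merged into one kernel-verified Lean document; each statement's English description precedes it below -/
import Mathlib

section
/- For fixed p ∈ (0,1), q ≥ 1 and integers S₁, S₂ ≥ 1, the function h ↦ p / (p + (1-p)·w(S₁)w(S₂)/w(S₁+S₂)), where w(S) = 1 + (q-1)e^{-hS}, is nondecreasing in h on [0,∞). -/
noncomputable def w (q h : ℝ) (S : ℕ) : ℝ := 1 + (q - 1) * Real.exp (-h * S)

lemma key_ratio_mono (u s t : ℝ) (hu : 0 ≤ u) (hs : 0 < s) (hst : s ≤ t)
    (ht1 : t ≤ 1) (m n : ℕ) :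
    (1 + u * s ^ m) * (1 + u * s ^ n) / (1 + u * s ^ (m + n)) ≤
      (1 + u * t ^ m) * (1 + u * t ^ n) / (1 + u * t ^ (m + n)) := by
  have ht : 0 < t := hs.trans_le hst
  have hs1 : s ≤ 1 := hst.trans ht1
  rw [div_le_div_iff₀ (by positivity) (by positivity), pow_add, pow_add]
  have ha : s ^ m ≤ t ^ m := pow_le_pow_left₀ hs.le hst m
  have hb : s ^ n ≤ t ^ n := pow_le_pow_left₀ hs.le hst n
  have hc1 : t ^ m ≤ 1 := pow_le_one₀ ht.le ht1
  have hd1 : t ^ n ≤ 1 := pow_le_one₀ ht.le ht1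
  have ha1 : s ^ m ≤ 1 := pow_le_one₀ hs.le hs1
  have hb1 : s ^ n ≤ 1 := pow_le_one₀ hs.le hs1
  have ha0 : 0 ≤ s ^ m := by positivity
  have hb0 : 0 ≤ s ^ n := by positivity
  have hc0 : 0 ≤ t ^ m := by positivity
  have hd0 : 0 ≤ t ^ n := by positivity
  nlinarith [mul_nonneg hu (mul_nonneg (by linarith : (0:ℝ) ≤ 1 - t ^ m) (by linarith : (0:ℝ) ≤ t ^ n - s ^ n)),
    mul_nonneg hu (mul_nonneg (by linarith : (0:ℝ) ≤ 1 - s ^ n) (by linarith : (0:ℝ) ≤ t ^ m - s ^ m)),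
    mul_nonneg (mul_nonneg hu hu) (mul_nonneg (mul_nonneg hc0 (by linarith : (0:ℝ) ≤ 1 - s ^ m)) (by linarith : (0:ℝ) ≤ t ^ n - s ^ n)),
    mul_nonneg (mul_nonneg hu hu) (mul_nonneg (mul_nonneg hb0 (by linarith : (0:ℝ) ≤ 1 - t ^ n)) (by linarith : (0:ℝ) ≤ t ^ m - s ^ m))]

theorem edge_prob_mono_in_h (p q : ℝ) (hp : 0 < p) (hp1 : p < 1) (hq : 1 ≤ q)
    (S₁ S₂ : ℕ) (hS₁ : 1 ≤ S₁) (hS₂ : 1 ≤ S₂) :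
    MonotoneOn
      (fun h : ℝ =>
        p / (p + (1 - p) * (w q h S₁ * w q h S₂ / w q h (S₁ + S₂))))
      (Set.Ici (0 : ℝ)) := by
  intro x hx y hy hxy
  simp only [Set.mem_Ici] at hx hy
  have hu : 0 ≤ q - 1 := by linarith
  have hw : ∀ (h : ℝ) (S : ℕ), w q h S = 1 + (q - 1) * (Real.exp (-h)) ^ S := by
    intro h S
    rw [w, show (-h * (S : ℝ)) = (S : ℝ) * (-h) by ring, Real.exp_nat_mul]
  have hex : 0 < Real.exp (-x) := Real.exp_pos _
  have hey : 0 < Real.exp (-y) := Real.exp_pos _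
  have hle : Real.exp (-y) ≤ Real.exp (-x) := Real.exp_le_exp.2 (by linarith)
  have hx1 : Real.exp (-x) ≤ 1 := Real.exp_le_one_iff.2 (by linarith)
  simp only [hw]
  have key := key_ratio_mono (q - 1) (Real.exp (-y)) (Real.exp (-x)) hu hey hle hx1 S₁ S₂
  set a := (1 + (q - 1) * Real.exp (-x) ^ S₁) * (1 + (q - 1) * Real.exp (-x) ^ S₂) /
      (1 + (q - 1) * Real.exp (-x) ^ (S₁ + S₂)) with hadef
  set b := (1 + (q - 1) * Real.exp (-y) ^ S₁) * (1 + (q - 1) * Real.exp (-y) ^ S₂) /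
      (1 + (q - 1) * Real.exp (-y) ^ (S₁ + S₂)) with hbdef
  have ha0 : 0 ≤ a := by rw [hadef]; positivity
  have hb0 : 0 ≤ b := by rw [hbdef]; positivity
  have hDy : 0 < p + (1 - p) * b := by nlinarith
  gcongr
end

section
/- For fixed p ∈ (0,1), h ≥ 0 and integers S₁, S₂ ≥ 1, the function q ↦ p / (p + (1-p)·w(S₁)w(S₂)/w(S₁+S₂)), where w(S) = 1 + (q-1)e^{-hS}, is nonincreasing in q on [1,∞). -/
theorem edge_prob_anti_in_q (p h : ℝ) (hp : 0 < p) (hp1 : p < 1) (hh : 0 ≤ h)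
    (S₁ S₂ : ℕ) (hS₁ : 1 ≤ S₁) (hS₂ : 1 ≤ S₂) :
    AntitoneOn
      (fun q : ℝ =>
        p / (p + (1 - p) * (w q h S₁ * w q h S₂ / w q h (S₁ + S₂))))
      (Set.Ici (1 : ℝ)) := by
  intro q₁ hq₁ q₂ hq₂ hle
  simp only [Set.mem_Ici] at hq₁ hq₂
  set a := Real.exp (-h * S₁) with ha
  set b := Real.exp (-h * S₂) with hb
  have hapos : 0 < a := Real.exp_pos _
  have hbpos : 0 < b := Real.exp_pos _
  have ha1 : a ≤ 1 := Real.exp_le_one_iff.mpr (by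
    have : (0:ℝ) ≤ h * S₁ := mul_nonneg hh (Nat.cast_nonneg _)
    linarith)
  have hb1 : b ≤ 1 := Real.exp_le_one_iff.mpr (by
    have : (0:ℝ) ≤ h * S₂ := mul_nonneg hh (Nat.cast_nonneg _)
    linarith)
  have hab : Real.exp (-h * ((S₁ + S₂ : ℕ) : ℝ)) = a * b := by
    rw [ha, hb, ← Real.exp_add]
    push_cast
    ring_nf
  simp only [w, hab]
  -- positivity of the w's
  have hw1 : ∀ q : ℝ, 1 ≤ q → (0:ℝ) < 1 + (q - 1) * a := fun q hq => by nlinarith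
  have hw2 : ∀ q : ℝ, 1 ≤ q → (0:ℝ) < 1 + (q - 1) * b := fun q hq => by nlinarith
  have hw3 : ∀ q : ℝ, 1 ≤ q → (0:ℝ) < 1 + (q - 1) * (a * b) := fun q hq => by
    nlinarith [mul_pos hapos hbpos, mul_nonneg (sub_nonneg.mpr hq) (mul_pos hapos hbpos).le]
  have key : (1 + (q₁ - 1) * a) * (1 + (q₁ - 1) * b) / (1 + (q₁ - 1) * (a * b)) ≤
      (1 + (q₂ - 1) * a) * (1 + (q₂ - 1) * b) / (1 + (q₂ - 1) * (a * b)) := by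
    rw [div_le_div_iff₀ (hw3 q₁ hq₁) (hw3 q₂ hq₂)]
    have hd : (0:ℝ) ≤ q₂ - q₁ := sub_nonneg.mpr hle
    have h1 : (0:ℝ) ≤ (q₂ - q₁) * (a * (1 - b) + b) := by
      have := mul_nonneg hapos.le (sub_nonneg.mpr hb1)
      nlinarith
    have h2 : (0:ℝ) ≤ (q₂ - q₁) * (a * b) * ((q₁ - 1) + (q₂ - 1)) := by
      exact mul_nonneg (mul_nonneg hd (mul_pos hapos hbpos).le) (by linarith)
    have h3 : (0:ℝ) ≤ (q₂ - q₁) * (a * b)^2 * ((q₁ - 1) * (q₂ - 1)) := by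
      have := mul_nonneg (sub_nonneg.mpr hq₁) (sub_nonneg.mpr hq₂)
      positivity
    nlinarith [h1, h2, h3]
  have hR1 : (0:ℝ) < (1 + (q₁ - 1) * a) * (1 + (q₁ - 1) * b) / (1 + (q₁ - 1) * (a * b)) :=
    div_pos (mul_pos (hw1 q₁ hq₁) (hw2 q₁ hq₁)) (hw3 q₁ hq₁)
  have hD1 : (0:ℝ) < p + (1 - p) * ((1 + (q₁ - 1) * a) * (1 + (q₁ - 1) * b) / (1 + (q₁ - 1) * (a * b))) := by
    nlinarith
  apply div_le_div_of_nonneg_left hp.le hD1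
  nlinarith
end
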